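/- Let θ < 1/2 and C ≥ 1 be real numbers, and set C₁ = 2·(5C)^(1/(1−2θ)). Let G be a group generated by a finite set X such that γ_X(n) ≤ exp(C·n^θ) for all n > 0. Let Y be a finite nonempty subset of G and let N = ⟨Y^G⟩ be its normal closure in G. Then there is a finite subset Z of G generating N with ℓ_X(Z) ≤ ℓ_X(Y) + C₁·ℓ_X(Y)^(θ/(1−θ)). -/

import Mathlib

/-- The word length of `g` with respect to the generating set `X`: the least `n`
such that `g` is a product of `n` elements of `X ∪ X⁻¹` (with length `0` for `1`). -/
noncomputable def wordLength {G : Type*} [Group G] (X : Set G) (g : G) : ℕ :=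
  sInf {n : ℕ | ∃ l : List G, l.length = n ∧ (∀ x ∈ l, x ∈ X ∨ x⁻¹ ∈ X) ∧ l.prod = g}

/-- The growth function `γ_X(n) = |{g ∈ G : ℓ_X(g) ≤ n}|`. -/
noncomputable def growth {G : Type*} [Group G] (X : Set G) (n : ℕ) : ℕ :=
  Set.ncard {g : G | wordLength X g ≤ n}

/-!
Let `H m` be the subgroup generated by the conjugates of `Y` by elements of length at most `m`, and
`L = ℓ_X(Y)`. If `H 0 < H 1 < ⋯ < H M`, pick `sᵢ ∈ H (i + 1) \ H i` of length at most `2M + L`: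
the `2 ^ M` ordered subproducts of the `sᵢ` are pairwise distinct (compare the last factor where two
of them differ, modulo `H i`) and have length at most `M (2M + L)`. Hence
`2 ^ M ≤ γ(M (2M + L)) ≤ exp (C (M (2M + L)) ^ θ)`, which forces
`M ≤ (5C) ^ (1/(1-2θ)) L ^ (θ/(1-θ))`.
The chain therefore stabilises at such an `M`. A stable `H M` is invariant under conjugation by the
generators, hence normal, hence equal to the normal closure of `Y`, and it is generated by the
conjugates defining it, of length at most `L + 2M`.
-/

section WordLength

variable {G : Type*} [Group G] {X : Set G}

theorem wordLength_list_prod_le_length {l : List G} (hl : ∀ x ∈ l, x ∈ X ∨ x⁻¹ ∈ X) :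
    wordLength X l.prod ≤ l.length :=
  Nat.sInf_le ⟨l, rfl, hl, rfl⟩

theorem exists_list_length_eq_wordLength (hX : Subgroup.closure X = ⊤) (g : G) :
    ∃ l : List G, l.length = wordLength X g ∧ (∀ x ∈ l, x ∈ X ∨ x⁻¹ ∈ X) ∧ l.prod = g := by
  have hg : g ∈ Submonoid.closure (X ∪ X⁻¹) := by
    rw [← Subgroup.closure_toSubmonoid, hX]; trivial
  obtain ⟨l, hl, rfl⟩ := Submonoid.exists_list_of_mem_closure hg
  exact Nat.sInf_mem (s := {n | ∃ l' : List G, l'.length = n ∧ (∀ x ∈ l', x ∈ X ∨ x⁻¹ ∈ X) ∧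
    l'.prod = l.prod}) ⟨l.length, l, rfl, hl, rfl⟩

@[simp] theorem wordLength_one : wordLength X (1 : G) = 0 :=
  Nat.le_zero.mp (wordLength_list_prod_le_length (l := []) (by simp))

theorem eq_one_of_wordLength_eq_zero (hX : Subgroup.closure X = ⊤) {g : G}
    (h : wordLength X g = 0) : g = 1 := by
  obtain ⟨l, hl, -, rfl⟩ := exists_list_length_eq_wordLength hX g
  simp [List.length_eq_zero_iff.mp (hl.trans h)]

theorem wordLength_mul_le (hX : Subgroup.closure X = ⊤) (g h : G) :
    wordLength X (g * h) ≤ wordLength X g + wordLength X h := by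
  obtain ⟨l₁, hl₁, hX₁, rfl⟩ := exists_list_length_eq_wordLength hX g
  obtain ⟨l₂, hl₂, hX₂, rfl⟩ := exists_list_length_eq_wordLength hX h
  rw [← List.prod_append, ← hl₁, ← hl₂, ← List.length_append]
  exact wordLength_list_prod_le_length fun x hx => (List.mem_append.mp hx).elim (hX₁ x) (hX₂ x)

theorem wordLength_inv_le (hX : Subgroup.closure X = ⊤) (g : G) :
    wordLength X g⁻¹ ≤ wordLength X g := by
  obtain ⟨l, hl, hlX, rfl⟩ := exists_list_length_eq_wordLength hX g
  rw [← hl, List.prod_inv_reverse, ← List.length_map (f := (·⁻¹)), ← List.length_reverse]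
  refine wordLength_list_prod_le_length fun x hx => ?_
  obtain ⟨y, hy, rfl⟩ := List.mem_map.mp (List.mem_reverse.mp hx)
  simpa [or_comm] using hlX y hy

theorem wordLength_le_one_of_mem {x : G} (hx : x ∈ X ∨ x⁻¹ ∈ X) : wordLength X x ≤ 1 := by
  simpa using wordLength_list_prod_le_length (X := X) (l := [x]) (by simpa using hx)

theorem finite_setOf_wordLength_le (hX : Subgroup.closure X = ⊤) (hXf : X.Finite) (n : ℕ) :
    {g : G | wordLength X g ≤ n}.Finite := by
  have : Finite ↥(X ∪ X⁻¹) := (hXf.union hXf.inv).to_subtype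
  refine ((List.finite_length_le _ n).image fun l : List ↥(X ∪ X⁻¹) => (l.map (↑)).prod).subset ?_
  intro g hg
  obtain ⟨l, hl, hlX, rfl⟩ := exists_list_length_eq_wordLength hX g
  lift l to List ↥(X ∪ X⁻¹) using fun x hx => by simpa using hlX x hx
  exact ⟨l, by rw [Set.mem_ofPred_eq, ← List.length_map (f := Subtype.val), hl]; exact hg, rfl⟩

end WordLength

section OrderedSubprod

variable {G : Type*} [Group G]

def orderedSubprod (s : ℕ → G) (ε : ℕ → Bool) : ℕ → G
  | 0 => 1
  | m + 1 => orderedSubprod s ε m * if ε m then s m else 1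

theorem Subgroup.eq_and_eq_of_mul_ite_eq_mul_ite {H : Subgroup G} {a b s : G} (ha : a ∈ H)
    (hb : b ∈ H) (hs : s ∉ H) {e e' : Bool}
    (h : (a * if e then s else 1) = b * if e' then s else 1) : e = e' ∧ a = b := by
  cases e <;> cases e' <;> simp only [if_true, if_false, mul_one, Bool.false_eq_true] at h
  · exact ⟨rfl, h⟩
  · exact (hs <| (H.mul_mem_cancel_left hb).mp (h ▸ ha)).elim
  · exact (hs <| (H.mul_mem_cancel_left ha).mp (h ▸ hb)).elim
  · exact ⟨rfl, mul_right_cancel h⟩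

variable {H : ℕ → Subgroup G} {s : ℕ → G}

theorem orderedSubprod_mem (hH : Monotone H) {m : ℕ} (hs : ∀ i < m, s i ∈ H (i + 1))
    (ε : ℕ → Bool) : orderedSubprod s ε m ∈ H m := by
  induction m with
  | zero => exact (H 0).one_mem
  | succ m ih =>
    refine (H _).mul_mem (hH m.le_succ (ih fun i hi => hs i (by omega))) ?_
    split
    · exact hs m m.lt_succ_self
    · exact (H _).one_mem

theorem eq_of_orderedSubprod_eq (hH : Monotone H) {M : ℕ}
    (hs : ∀ i < M, s i ∈ H (i + 1) ∧ s i ∉ H i) {ε ε' : ℕ → Bool}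
    (h : orderedSubprod s ε M = orderedSubprod s ε' M) : ∀ i < M, ε i = ε' i := by
  induction M with
  | zero => simp
  | succ M ih =>
    have hs' : ∀ i < M, s i ∈ H (i + 1) ∧ s i ∉ H i := fun i hi => hs i (by omega)
    obtain ⟨hεM, heq⟩ := Subgroup.eq_and_eq_of_mul_ite_eq_mul_ite
      (orderedSubprod_mem hH (fun i hi => (hs' i hi).1) ε)
      (orderedSubprod_mem hH (fun i hi => (hs' i hi).1) ε') (hs M M.lt_succ_self).2 h
    intro i hi
    rcases Nat.lt_succ_iff_lt_or_eq.mp hi with hi | rfl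
    · exact ih hs' heq i hi
    · exact hεM

theorem wordLength_orderedSubprod_le {X : Set G} (hX : Subgroup.closure X = ⊤) {K m : ℕ}
    (hs : ∀ i < m, wordLength X (s i) ≤ K) (ε : ℕ → Bool) :
    wordLength X (orderedSubprod s ε m) ≤ m * K := by
  induction m with
  | zero => simp [orderedSubprod]
  | succ m ih =>
    have hlast : wordLength X (if ε m then s m else 1) ≤ K := by
      split
      · exact hs m m.lt_succ_self
      · simp
    calc wordLength X (orderedSubprod s ε (m + 1))
        ≤ wordLength X (orderedSubprod s ε m) + wordLength X (if ε m then s m else 1) :=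
          wordLength_mul_le hX _ _
      _ ≤ m * K + K := add_le_add (ih fun i hi => hs i (by omega)) hlast
      _ = (m + 1) * K := by ring

theorem two_pow_le_growth {X : Set G} (hX : Subgroup.closure X = ⊤) (hXf : X.Finite)
    (hH : Monotone H) {M K n : ℕ}
    (hs : ∀ i < M, s i ∈ H (i + 1) ∧ s i ∉ H i ∧ wordLength X (s i) ≤ K) (hn : M * K ≤ n) :
    2 ^ M ≤ growth X n := by
  let ε : (Fin M → Bool) → ℕ → Bool := fun v i => if hi : i < M then v ⟨i, hi⟩ else false
  have hball : ∀ v, orderedSubprod s (ε v) M ∈ {g : G | wordLength X g ≤ n} := fun v =>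
    (wordLength_orderedSubprod_le hX (fun i hi => (hs i hi).2.2) _).trans hn
  have hinj : Function.Injective fun v => (⟨_, hball v⟩ : {g : G | wordLength X g ≤ n}) := by
    intro v v' h
    funext i
    simpa [ε, i.2] using eq_of_orderedSubprod_eq hH (fun i hi => ⟨(hs i hi).1, (hs i hi).2.1⟩)
      (congrArg Subtype.val h) i i.2
  have := (finite_setOf_wordLength_le hX hXf n).to_subtype
  calc 2 ^ M = Nat.card (Fin M → Bool) := by simp
    _ ≤ Nat.card {g : G | wordLength X g ≤ n} := Nat.card_le_card_of_injective _ hinj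
    _ = growth X n := Nat.card_coe_set_eq _

end OrderedSubprod

section BoundedConjugates

variable {G : Type*} [Group G] {X Y : Set G}

def boundedConjugates (X Y : Set G) (m : ℕ) : Set G :=
  Set.image2 (fun w y => w * y * w⁻¹) {w | wordLength X w ≤ m} Y

theorem boundedConjugates_mono : Monotone (boundedConjugates X Y) := fun _ _ h =>
  Set.image2_subset_right fun _ hw => le_trans hw h

theorem subset_boundedConjugates (m : ℕ) : Y ⊆ boundedConjugates X Y m := fun y hy =>
  ⟨1, by simp, y, hy, by simp⟩

theorem boundedConjugates_subset_normalClosure (m : ℕ) :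
    boundedConjugates X Y m ⊆ Subgroup.normalClosure Y := by
  rintro _ ⟨w, -, y, hy, rfl⟩
  exact Subgroup.normalClosure_normal.conj_mem y (Subgroup.subset_normalClosure hy) w

theorem wordLength_le_of_mem_boundedConjugates (hX : Subgroup.closure X = ⊤) {L m : ℕ}
    (hY : ∀ y ∈ Y, wordLength X y ≤ L) {g : G} (hg : g ∈ boundedConjugates X Y m) :
    wordLength X g ≤ 2 * m + L := by
  obtain ⟨w, hw, y, hy, rfl⟩ := hg
  change wordLength X (w * y * w⁻¹) ≤ _
  have := wordLength_mul_le hX (w * y) w⁻¹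
  have := wordLength_mul_le hX w y
  have := wordLength_inv_le hX w
  have := hY y hy
  simp only [Set.mem_ofPred_eq] at hw
  omega

theorem finite_boundedConjugates (hX : Subgroup.closure X = ⊤) (hXf : X.Finite) (hYf : Y.Finite)
    (m : ℕ) : (boundedConjugates X Y m).Finite :=
  (finite_setOf_wordLength_le hX hXf m).image2 _ hYf

theorem conj_mem_closure_boundedConjugates_succ (hX : Subgroup.closure X = ⊤) {w : G}
    (hw : wordLength X w ≤ 1) {m : ℕ} {g : G}
    (hg : g ∈ Subgroup.closure (boundedConjugates X Y m)) :
    w * g * w⁻¹ ∈ Subgroup.closure (boundedConjugates X Y (m + 1)) := by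
  have hmap : (Subgroup.closure (boundedConjugates X Y m)).map (MulAut.conj w).toMonoidHom ≤
      Subgroup.closure (boundedConjugates X Y (m + 1)) := by
    rw [MonoidHom.map_closure]
    refine Subgroup.closure_mono ?_
    rintro _ ⟨_, ⟨u, hu, y, hy, rfl⟩, rfl⟩
    refine ⟨w * u, ?_, y, hy, by simp [mul_assoc]⟩
    have := wordLength_mul_le hX w u
    simp only [Set.mem_ofPred_eq] at hu ⊢
    omega
  exact hmap (Subgroup.mem_map_of_mem _ hg)

-- Stability makes the subgroup invariant under conjugation by the generators and their inverses,
-- so its normalizer contains `closure X = ⊤`.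
theorem closure_boundedConjugates_eq_normalClosure (hX : Subgroup.closure X = ⊤) {m : ℕ}
    (h : Subgroup.closure (boundedConjugates X Y m) =
      Subgroup.closure (boundedConjugates X Y (m + 1))) :
    Subgroup.closure (boundedConjugates X Y m) = Subgroup.normalClosure Y := by
  set H := Subgroup.closure (boundedConjugates X Y m)
  have hconj : ∀ w : G, wordLength X w ≤ 1 → ∀ g ∈ H, w * g * w⁻¹ ∈ H := fun w hw g hg =>
    h ▸ conj_mem_closure_boundedConjugates_succ hX hw hg
  have hnormalizer : Subgroup.closure X ≤ Subgroup.normalizer (H : Set G) := by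
    refine (Subgroup.closure_le _).mpr fun x hx => Subgroup.mem_normalizer_iff.mpr fun g => ?_
    refine ⟨hconj x (wordLength_le_one_of_mem (.inl hx)) g, fun hg => ?_⟩
    simpa [mul_assoc] using hconj x⁻¹ (wordLength_le_one_of_mem (.inr (by simpa))) _ hg
  have : H.Normal := Subgroup.normalizer_eq_top_iff.mp (top_le_iff.mp (hX ▸ hnormalizer))
  exact le_antisymm ((Subgroup.closure_le _).mpr (boundedConjugates_subset_normalClosure m))
    (Subgroup.normalClosure_le_normal (subset_boundedConjugates m |>.trans Subgroup.subset_closure))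

theorem two_pow_le_growth_of_closure_boundedConjugates_ne (hX : Subgroup.closure X = ⊤)
    (hXf : X.Finite) {L M n : ℕ} (hY : ∀ y ∈ Y, wordLength X y ≤ L)
    (hchain : ∀ m < M, Subgroup.closure (boundedConjugates X Y m) ≠
      Subgroup.closure (boundedConjugates X Y (m + 1)))
    (hn : M * (2 * M + L) ≤ n) : 2 ^ M ≤ growth X n := by
  have hH : Monotone fun m => Subgroup.closure (boundedConjugates X Y m) := fun _ _ h =>
    Subgroup.closure_mono (boundedConjugates_mono h)
  have hwitness : ∀ m < M, ∃ s ∈ boundedConjugates X Y (m + 1),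
      s ∉ Subgroup.closure (boundedConjugates X Y m) := by
    intro m hm
    by_contra! hsub
    exact hchain m hm <| le_antisymm (hH m.le_succ) ((Subgroup.closure_le _).mpr hsub)
  choose! s hs hsH using hwitness
  refine two_pow_le_growth hX hXf hH (fun i hi => ⟨Subgroup.subset_closure (hs i hi), hsH i hi,
    (wordLength_le_of_mem_boundedConjugates hX hY (hs i hi)).trans ?_⟩) hn
  omega

end BoundedConjugates

section Estimates

open Real Filter

theorem eq_zero_of_forall_mul_log_two_le {θ C : ℝ} (hθ : θ < 0) {M N : ℕ}
    (h : ∀ n : ℕ, N ≤ n → 0 < n → M * log 2 ≤ C * (n : ℝ) ^ θ) : M = 0 := by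
  have hlim : Tendsto (fun n : ℕ => C * (n : ℝ) ^ θ) atTop (nhds 0) := by
    simpa using ((tendsto_rpow_neg_atTop (neg_pos.mpr hθ)).comp
      tendsto_natCast_atTop_atTop).const_mul C
  obtain ⟨n, hn⟩ := ((hlim.eventually (gt_mem_nhds (log_pos one_lt_two))).and
    (eventually_ge_atTop (max N 1))).exists
  have := h n (le_of_max_le_left hn.2) (le_of_max_le_right hn.2)
  have : (M : ℝ) < 1 := by nlinarith [log_pos one_lt_two, hn.1]
  exact Nat.lt_one_iff.mp (by exact_mod_cast this)

theorem rpow_one_sub_le_of_mul_log_two_le {x y C θ : ℝ} (hx : 0 < x) (hy : 0 ≤ y) (hC : 0 ≤ C)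
    (hθ : θ ≤ 1 / 2) (h : x * log 2 ≤ C * (3 * x * y) ^ θ) :
    x ^ (1 - θ) ≤ 5 * C * y ^ θ := by
  have hthree : (3 : ℝ) ^ θ ≤ 2 :=
    calc (3 : ℝ) ^ θ ≤ 3 ^ (1 / 2 : ℝ) := rpow_le_rpow_of_exponent_le (by norm_num) hθ
      _ = √3 := (sqrt_eq_rpow 3).symm
      _ ≤ 2 := sqrt_le_iff.mpr ⟨by norm_num, by norm_num⟩
  have hxθ : 0 < x ^ θ := rpow_pos_of_pos hx θ
  have hlog : x ^ (1 - θ) * log 2 ≤ 2 * C * y ^ θ := by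
    refine le_of_mul_le_mul_right ?_ hxθ
    calc x ^ (1 - θ) * log 2 * x ^ θ = x * log 2 := by
          rw [mul_right_comm, ← rpow_add hx, sub_add_cancel, rpow_one]
      _ ≤ C * (3 ^ θ * x ^ θ * y ^ θ) := by
          rwa [← mul_rpow (by positivity) hx.le, ← mul_rpow (by positivity) hy]
      _ ≤ C * (2 * x ^ θ * y ^ θ) := by gcongr
      _ = 2 * C * y ^ θ * x ^ θ := by ring
  nlinarith [log_two_gt_d9, rpow_nonneg hx.le (1 - θ), rpow_nonneg hy θ]

theorem le_of_mul_log_two_le_rpow {θ C : ℝ} (hθ₀ : 0 ≤ θ) (hθ : θ < 1 / 2) (hC : 1 ≤ C)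
    {M L : ℕ} (hM : 0 < M) (hL : 1 ≤ L) (h : M * log 2 ≤ C * ((M * (2 * M + L) : ℕ) : ℝ) ^ θ) :
    (M : ℝ) ≤ (5 * C) ^ (1 / (1 - 2 * θ)) * (L : ℝ) ^ (θ / (1 - θ)) := by
  have hMpos : (0 : ℝ) < M := by exact_mod_cast hM
  have hL' : (1 : ℝ) ≤ L := by exact_mod_cast hL
  have hmono : ∀ y : ℝ, ((M * (2 * M + L) : ℕ) : ℝ) ≤ 3 * M * y →
      (M : ℝ) * log 2 ≤ C * (3 * M * y) ^ θ := fun y hy =>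
    h.trans (by gcongr)
  rcases le_or_gt (L : ℝ) M with hLM | hML
  · have h₁ := rpow_one_sub_le_of_mul_log_two_le hMpos hMpos.le (by linarith) hθ.le
      (hmono M (by push_cast; nlinarith))
    have h₂ : (M : ℝ) ^ (1 - 2 * θ) ≤ 5 * C := by
      rwa [show 1 - 2 * θ = (1 - θ) - θ by ring, rpow_sub hMpos,
        div_le_iff₀ (rpow_pos_of_pos hMpos θ)]
    calc (M : ℝ) ≤ (5 * C) ^ (1 / (1 - 2 * θ)) := by
          rw [one_div]
          exact (le_rpow_inv_iff_of_pos hMpos.le (by linarith) (by linarith)).mpr h₂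
      _ ≤ (5 * C) ^ (1 / (1 - 2 * θ)) * (L : ℝ) ^ (θ / (1 - θ)) :=
          le_mul_of_one_le_right (by positivity)
            (one_le_rpow hL' (div_nonneg hθ₀ (by linarith)))
  · have h₁ := rpow_one_sub_le_of_mul_log_two_le hMpos (by linarith) (by linarith) hθ.le
      (hmono L (by push_cast; nlinarith))
    calc (M : ℝ) ≤ (5 * C * (L : ℝ) ^ θ) ^ (1 / (1 - θ)) := by
          rw [one_div]
          exact (le_rpow_inv_iff_of_pos hMpos.le (by positivity) (by linarith)).mpr h₁
      _ = (5 * C) ^ (1 / (1 - θ)) * (L : ℝ) ^ (θ / (1 - θ)) := by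
          rw [mul_rpow (by positivity) (by positivity), ← rpow_mul (by positivity), mul_one_div]
      _ ≤ (5 * C) ^ (1 / (1 - 2 * θ)) * (L : ℝ) ^ (θ / (1 - θ)) := by
          gcongr <;> linarith

end Estimates

section Stabilization

open Real

variable {G : Type*} [Group G] {X Y : Set G}

theorem le_of_forall_closure_boundedConjugates_ne
    (hX : Subgroup.closure X = ⊤) (hXf : X.Finite) {θ C : ℝ} (hθ : θ < 1 / 2) (hC : 1 ≤ C)
    (hgrowth : ∀ n : ℕ, 0 < n → (growth X n : ℝ) ≤ exp (C * (n : ℝ) ^ θ)) {L M : ℕ}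
    (hY : ∀ y ∈ Y, wordLength X y ≤ L)
    (hchain : ∀ m < M, Subgroup.closure (boundedConjugates X Y m) ≠
      Subgroup.closure (boundedConjugates X Y (m + 1))) :
    (M : ℝ) ≤ (5 * C) ^ (1 / (1 - 2 * θ)) * (L : ℝ) ^ (θ / (1 - θ)) := by
  have hlog : ∀ n : ℕ, M * (2 * M + L) ≤ n → 0 < n → M * log 2 ≤ C * (n : ℝ) ^ θ := by
    intro n hn hn₀
    have := (Nat.cast_le.mpr (two_pow_le_growth_of_closure_boundedConjugates_ne hX hXf hY hchain
      hn)).trans (hgrowth n hn₀)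
    rwa [← log_le_log_iff (by positivity) (exp_pos _), Nat.cast_pow, Nat.cast_ofNat, log_pow,
      log_exp] at this
  rcases lt_or_ge θ 0 with hθ₀ | hθ₀
  · rw [eq_zero_of_forall_mul_log_two_le hθ₀ hlog, Nat.cast_zero]
    positivity
  rcases Nat.eq_zero_or_pos M with rfl | hM
  · rw [Nat.cast_zero]
    positivity
  have hL : 1 ≤ L := by
    by_contra! hL₀
    have hY₁ : Y ⊆ {1} := fun y hy =>
      eq_one_of_wordLength_eq_zero hX (Nat.lt_one_iff.mp ((hY y hy).trans_lt hL₀))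
    have hbot : ∀ m, Subgroup.closure (boundedConjugates X Y m) = ⊥ := fun m =>
      eq_bot_iff.mpr <| (Subgroup.closure_le _).mpr fun g hg => by
        simpa [Subgroup.normalClosure_eq_bot_iff.mpr hY₁] using
          boundedConjugates_subset_normalClosure m hg
    exact hchain 0 hM (by rw [hbot, hbot])
  exact le_of_mul_log_two_le_rpow hθ₀ hθ hC hM hL (hlog _ le_rfl (by positivity))

theorem exists_closure_boundedConjugates_eq_normalClosure
    (hX : Subgroup.closure X = ⊤) (hXf : X.Finite) {θ C : ℝ} (hθ : θ < 1 / 2) (hC : 1 ≤ C)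
    (hgrowth : ∀ n : ℕ, 0 < n → (growth X n : ℝ) ≤ exp (C * (n : ℝ) ^ θ)) {L : ℕ}
    (hY : ∀ y ∈ Y, wordLength X y ≤ L) :
    ∃ M : ℕ, Subgroup.closure (boundedConjugates X Y M) = Subgroup.normalClosure Y ∧
      (M : ℝ) ≤ (5 * C) ^ (1 / (1 - 2 * θ)) * (L : ℝ) ^ (θ / (1 - θ)) := by
  classical
  have hbound := fun M => le_of_forall_closure_boundedConjugates_ne hX hXf hθ hC hgrowth (M := M) hY
  have hstab : ∃ m, Subgroup.closure (boundedConjugates X Y m) =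
      Subgroup.closure (boundedConjugates X Y (m + 1)) := by
    by_contra! h
    obtain ⟨M, hM⟩ := exists_nat_gt ((5 * C) ^ (1 / (1 - 2 * θ)) * (L : ℝ) ^ (θ / (1 - θ)))
    exact hM.not_ge (hbound M fun m _ => h m)
  exact ⟨Nat.find hstab, closure_boundedConjugates_eq_normalClosure hX (Nat.find_spec hstab),
    hbound _ fun m hm => Nat.find_min hstab hm⟩

end Stabilization

theorem quantitative_generalized_milnor_lemma_general {G : Type*} [Group G] (X : Finset G)
    (hX : Subgroup.closure (X : Set G) = ⊤)
    (θ C : ℝ) (hθ : θ < 1 / 2) (hC : 1 ≤ C)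
    (C₁ : ℝ) (hC₁ : C₁ = 2 * (5 * C) ^ ((1 : ℝ) / (1 - 2 * θ)))
    (hgrowth : ∀ n : ℕ, 0 < n → (growth (X : Set G) n : ℝ) ≤ Real.exp (C * (n : ℝ) ^ θ))
    (Y : Finset G) :
    ∃ Z : Finset G,
      Subgroup.closure (Z : Set G) = Subgroup.normalClosure (Y : Set G) ∧
      ((Z.sup (wordLength (X : Set G)) : ℕ) : ℝ) ≤
        ((Y.sup (wordLength (X : Set G)) : ℕ) : ℝ) +
          C₁ * ((Y.sup (wordLength (X : Set G)) : ℕ) : ℝ) ^ (θ / (1 - θ)) := by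
  set L := Y.sup (wordLength (X : Set G))
  have hYL : ∀ y ∈ (Y : Set G), wordLength X y ≤ L := fun y hy => Finset.le_sup hy
  obtain ⟨M, hMY, hM⟩ := exists_closure_boundedConjugates_eq_normalClosure hX X.finite_toSet hθ hC
    hgrowth hYL
  have hZ := finite_boundedConjugates hX X.finite_toSet Y.finite_toSet M
  refine ⟨hZ.toFinset, by rwa [hZ.coe_toFinset], ?_⟩
  have hZL : hZ.toFinset.sup (wordLength X) ≤ 2 * M + L := Finset.sup_le fun z hz =>
    wordLength_le_of_mem_boundedConjugates hX hYL (hZ.mem_toFinset.mp hz)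
  calc ((hZ.toFinset.sup (wordLength (X : Set G)) : ℕ) : ℝ) ≤ 2 * M + L := by exact_mod_cast hZL
    _ ≤ L + C₁ * (L : ℝ) ^ (θ / (1 - θ)) := by rw [hC₁]; linarith

/-- Generalized Milnor lemma, quantitative version. -/
theorem quantitative_generalized_milnor_lemma {G : Type*} [Group G] (X : Finset G)
    (hX : Subgroup.closure (X : Set G) = ⊤)
    (θ C : ℝ) (hθ : θ < 1 / 2) (hC : 1 ≤ C)
    (C₁ : ℝ) (hC₁ : C₁ = 2 * (5 * C) ^ ((1 : ℝ) / (1 - 2 * θ)))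
    (hgrowth : ∀ n : ℕ, 0 < n → (growth (X : Set G) n : ℝ) ≤ Real.exp (C * (n : ℝ) ^ θ))
    (Y : Finset G) (hY : Y.Nonempty) :
    ∃ Z : Finset G,
      Subgroup.closure (Z : Set G) = Subgroup.normalClosure (Y : Set G) ∧
      ((Z.sup (wordLength (X : Set G)) : ℕ) : ℝ) ≤
        ((Y.sup (wordLength (X : Set G)) : ℕ) : ℝ) +
          C₁ * ((Y.sup (wordLength (X : Set G)) : ℕ) : ℝ) ^ (θ / (1 - θ)) :=
  quantitative_generalized_milnor_lemma_general X hX θ C hθ hC C₁ hC₁ hgrowth Y
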